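/- arXiv:1208.4835 — 6 statements merged into one kernel-verified Lean document; each statement's English description precedes it below -/
import Mathlib

section
/- Parametrize irreducible representations of SU(n) by dominant weights λ = (λ₁ ≥ λ₂ ≥ ... ≥ λ_{n-1} ≥ λₙ = 0) in ℤ^n, with dimension d_λ = ∏_{1 ≤ i < j ≤ n} (λ_i - λ_j + j - i)/(j - i). Then d_λ ≥ (λ₁ + 1)^{n-1} / (2^{n-2} ∏_{1 ≤ i < j ≤ n} (j - i)). -/
/-!
Write `N(i, j) = λ_i - λ_j + j - i` for the numerator of the Weyl factor at `i < j`; it is a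
positive integer. Since `N(i, j) + N(j, k) = N(i, k)`, the elementary bound `ab ≥ a + b - 1` for
`a, b ≥ 1` gives `N(1, j) N(j, n) ≥ N(1, n) - 1 ≥ λ₁ + 1` for every `1 < j < n`, and
`N(1, n) ≥ λ₁ + 1` as well. Discarding all other factors, which are `≥ 1`, the product of the
numerators is at least `(λ₁ + 1)^{n-1}`; the factor `2^{n-2} ≥ 1` only weakens the bound.
-/

open Finset

namespace WeylDimension

variable {n : ℕ}

def weylNumerator (lam : Fin n → ℤ) (i j : Fin n) : ℤ :=
  lam i - lam j + ((j : ℕ) : ℤ) - ((i : ℕ) : ℤ)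

lemma weylNumerator_add_weylNumerator (lam : Fin n → ℤ) (i j k : Fin n) :
    weylNumerator lam i j + weylNumerator lam j k = weylNumerator lam i k := by
  unfold weylNumerator
  ring

lemma sub_add_one_le_weylNumerator (lam : Fin n → ℤ) {i j : Fin n} (hij : i < j) :
    lam i - lam j + 1 ≤ weylNumerator lam i j := by
  have : (i : ℕ) < j := hij
  unfold weylNumerator
  omega

variable {lam : Fin n → ℤ}

lemma one_le_weylNumerator (hlam : Antitone lam) {i j : Fin n} (hij : i < j) :
    1 ≤ weylNumerator lam i j := by
  linarith [sub_add_one_le_weylNumerator lam hij, hlam hij.le]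

lemma sub_add_one_le_weylNumerator_mul (hlam : Antitone lam) {i j k : Fin n} (hij : i < j)
    (hjk : j < k) :
    lam i - lam k + 1 ≤ weylNumerator lam i j * weylNumerator lam j k := by
  have hi := one_le_weylNumerator hlam hij
  have hk := one_le_weylNumerator hlam hjk
  have hsum := weylNumerator_add_weylNumerator lam i j k
  have hik : lam i - lam k + 2 ≤ weylNumerator lam i k := by
    have : (i : ℕ) < j := hij
    have : (j : ℕ) < k := hjk
    unfold weylNumerator
    omega
  nlinarith [mul_nonneg (sub_nonneg.2 hi) (sub_nonneg.2 hk)]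

theorem prod_hook_le_prod_weylNumerator (hlam : Antitone lam) {a z : Fin n} (haz : a < z) :
    weylNumerator lam a z * ∏ j ∈ Ioo a z, weylNumerator lam a j * weylNumerator lam j z ≤
      ∏ q ∈ univ.filter (fun q : Fin n × Fin n => q.1 < q.2), weylNumerator lam q.1 q.2 := by
  set hook := insert (a, z) ((Ioo a z).image (a, ·) ∪ (Ioo a z).image (·, z))
  have hsub : hook ⊆ univ.filter (fun q : Fin n × Fin n => q.1 < q.2) := by
    intro q hq
    simp only [hook, mem_insert, mem_union, mem_image, mem_Ioo] at hq
    rcases hq with rfl | ⟨j, hj, rfl⟩ | ⟨j, hj, rfl⟩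
    · simpa using haz
    · simpa using hj.1
    · simpa using hj.2
  have hprod : ∏ q ∈ hook, weylNumerator lam q.1 q.2 =
      weylNumerator lam a z * ∏ j ∈ Ioo a z, weylNumerator lam a j * weylNumerator lam j z := by
    rw [prod_insert (by simp), prod_union, prod_image (by simp), prod_image (by simp),
      prod_mul_distrib]
    simp only [disjoint_left, mem_image, mem_Ioo]
    rintro _ ⟨j, hj, rfl⟩ ⟨k, hk, hkj⟩
    simp only [Prod.ext_iff] at hkj
    exact hk.1.ne hkj.1.symm
  rw [← hprod]
  have hone : ∀ q ∈ univ.filter (fun q : Fin n × Fin n => q.1 < q.2),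
      1 ≤ weylNumerator lam q.1 q.2 := fun q hq => one_le_weylNumerator hlam (mem_filter.1 hq).2
  exact prod_le_prod_of_subset_of_one_le hsub (fun q hq => zero_le_one.trans (hone q (hsub hq)))
    fun q hq _ => hone q hq

theorem pow_le_prod_weylNumerator (hlam : Antitone lam) {a z : Fin n} (haz : a < z) :
    (lam a - lam z + 1) ^ ((z : ℕ) - a) ≤
      ∏ q ∈ univ.filter (fun q : Fin n × Fin n => q.1 < q.2), weylNumerator lam q.1 q.2 := by
  have hbase : 0 ≤ lam a - lam z + 1 := by linarith [hlam haz.le]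
  calc (lam a - lam z + 1) ^ ((z : ℕ) - a)
      = (lam a - lam z + 1) * ∏ _j ∈ Ioo a z, (lam a - lam z + 1) := by
        rw [prod_const, Fin.card_Ioo, ← pow_succ']
        congr 1
        have : (a : ℕ) < z := haz
        omega
    _ ≤ weylNumerator lam a z * ∏ j ∈ Ioo a z, weylNumerator lam a j * weylNumerator lam j z := by
        gcongr with j hj
        · exact zero_le_one.trans (one_le_weylNumerator hlam haz)
        · exact sub_add_one_le_weylNumerator lam haz
        · rw [mem_Ioo] at hj
          exact sub_add_one_le_weylNumerator_mul hlam hj.1 hj.2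
    _ ≤ _ := prod_hook_le_prod_weylNumerator hlam haz

end WeylDimension

/-- For a dominant weight `λ₁ ≥ ⋯ ≥ λ_{n-1} ≥ λₙ = 0` of `SU(n)`, the Weyl
dimension `d_λ = ∏_{i<j} (λ_i - λ_j + j - i)/(j - i)` satisfies
`d_λ ≥ (λ₁+1)^{n-1} / (2^{n-2} ∏_{i<j} (j-i))`. -/
theorem stmt_8 (n : ℕ) (hn : 2 ≤ n) (lam : Fin n → ℤ)
    (hmono : ∀ i j : Fin n, i ≤ j → lam j ≤ lam i)
    (hlast : lam ⟨n - 1, by omega⟩ = 0) :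
    ((lam ⟨0, by omega⟩ : ℝ) + 1) ^ (n - 1) /
        (2 ^ (n - 2) *
          ∏ q ∈ univ.filter (fun q : Fin n × Fin n => q.1 < q.2),
            (((q.2 : ℕ) - (q.1 : ℕ) : ℕ) : ℝ)) ≤
      ∏ q ∈ univ.filter (fun q : Fin n × Fin n => q.1 < q.2),
        ((lam q.1 - lam q.2 + ((q.2 : ℕ) : ℤ) - ((q.1 : ℕ) : ℤ) : ℤ) : ℝ) /
          (((q.2 : ℕ) - (q.1 : ℕ) : ℕ) : ℝ) := by
  have hdist : 0 < ∏ q ∈ univ.filter (fun q : Fin n × Fin n => q.1 < q.2),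
      (((q.2 : ℕ) - (q.1 : ℕ) : ℕ) : ℝ) := by
    refine prod_pos fun q hq => ?_
    have : (q.1 : ℕ) < q.2 := (mem_filter.1 hq).2
    exact_mod_cast Nat.sub_pos_of_lt this
  have hnum := WeylDimension.pow_le_prod_weylNumerator (fun i j hij => hmono i j hij)
    (a := ⟨0, by omega⟩) (z := ⟨n - 1, by omega⟩) (Fin.mk_lt_mk.2 (by omega))
  rw [hlast, sub_zero, Nat.sub_zero] at hnum
  have hlam0 : (0 : ℝ) ≤ lam ⟨0, by omega⟩ := by
    exact_mod_cast hlast ▸ hmono ⟨0, by omega⟩ ⟨n - 1, by omega⟩ (Fin.mk_le_mk.2 (by omega))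
  rw [prod_div_distrib]
  calc _ ≤ ((lam ⟨0, by omega⟩ : ℝ) + 1) ^ (n - 1) /
        ∏ q ∈ univ.filter (fun q : Fin n × Fin n => q.1 < q.2), (((q.2 : ℕ) - (q.1 : ℕ) : ℕ) : ℝ) :=
        div_le_div_of_nonneg_left (by positivity) hdist
          (le_mul_of_one_le_left hdist.le (one_le_pow₀ (by norm_num)))
    _ ≤ _ := div_le_div_of_nonneg_right (by exact_mod_cast hnum) hdist.le
end

section
/- For SU(3): let λ = (λ₁, λ₂, 0) and μ = (μ₁, μ₂, 0) be dominant weights, and suppose ν appears in the Littlewood–Richardson decomposition of π_λ ⊗ π_μ, so ν₁ = λ₁+μ₁-α₁-α₂, ν₂ = λ₂+μ₂+α₁-β, ν₃ = α₂+β for nonnegative integers α₁, α₂, β satisfying α₁ ≤ λ₁-λ₂, α₂ ≤ λ₂, α₂+β ≤ λ₂+α₁, α₁+α₂ ≤ μ₁-μ₂+β, β ≤ μ₂, α₂ ≤ μ₁-μ₂. Then with d_λ = (λ₁-λ₂+1)(λ₁+2)(λ₂+1)/2 (and similarly for μ, and d_ν = (ν₁-ν₂+1)(ν₁-ν₃+2)(ν₂-ν₃+1)/2),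 one has d_ν/(d_λ d_μ) ≤ 3. -/
/-!
In fact `d_ν ≤ d_λ d_μ`. Put `p = λ₁ - λ₂`, `r = λ₂`, `s = μ₁ - μ₂`, `u = μ₂`, so that
`2 d_λ = (p + 1)(r + 1)(λ₁ + 2)` and `2 d_μ = (s + 1)(u + 1)(μ₁ + 2)`. The middle factor of
`2 d_ν` satisfies `2 (ν₁ - ν₃ + 2) ≤ 2 (λ₁ + μ₁ + 2) ≤ (λ₁ + 2)(μ₁ + 2)`. With `t = β - α₁`, the
two outer factors are at most `p + s + 1 + t` and `r + u + 1 - t`, and the LR constraints confine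
`t` to `[-min p s, min r u]`; on that range `(p + s + 1 + t)(r + u + 1 - t)` stays below
`(p + 1)(s + 1)(r + 1)(u + 1)`, because `t (r + u - t) ≤ r u` for `0 ≤ t ≤ min r u`.
-/

lemma add_add_one_add_mul_sub_le {x y z w t : ℤ} (hx : 0 ≤ x) (hy : 0 ≤ y) (ht : 0 ≤ t)
    (htz : t ≤ z) (htw : t ≤ w) :
    (x + y + 1 + t) * (z + w + 1 - t) ≤ (x + 1) * (y + 1) * ((z + 1) * (w + 1)) := by
  have hz : 0 ≤ z := ht.trans htz
  have hw : 0 ≤ w := ht.trans htw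
  have hxy := mul_nonneg hx hy
  have hzw := mul_nonneg hz hw
  -- the difference of the two sides is a sum of these products
  linarith [mul_nonneg (sub_nonneg.2 htz) (sub_nonneg.2 htw), mul_nonneg ht (add_nonneg hx hy),
    mul_nonneg hxy (add_nonneg hz hw), mul_nonneg (add_nonneg hx hy) hzw, mul_nonneg hxy hzw]

lemma lr_outer_factors_mul_le {p r s u a1 a2 b : ℤ} (hp : 0 ≤ p) (hr : 0 ≤ r) (hs : 0 ≤ s)
    (hu : 0 ≤ u) (ha1 : 0 ≤ a1) (ha2 : 0 ≤ a2) (hb : 0 ≤ b) (c1 : a1 ≤ p) (c3 : a2 + b ≤ r + a1)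
    (c4 : a1 + a2 ≤ s + b) (c5 : b ≤ u) :
    (p + s + 1 - 2 * a1 - a2 + b) * (r + u + 1 + a1 - a2 - 2 * b) ≤
      (p + 1) * (s + 1) * ((r + 1) * (u + 1)) := by
  have hZ : 0 ≤ r + u + 1 + a1 - a2 - 2 * b := by linarith
  rcases le_total a1 b with hab | hba
  · calc _ ≤ (p + s + 1 + (b - a1)) * (r + u + 1 - (b - a1)) :=
          mul_le_mul (by linarith) (by linarith) hZ (by linarith)
      _ ≤ _ := add_add_one_add_mul_sub_le hp hs (by linarith) (by linarith) (by linarith)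
  · calc _ ≤ (p + s + 1 - (a1 - b)) * (r + u + 1 + (a1 - b)) :=
          mul_le_mul (by linarith) (by linarith) hZ (by linarith)
      _ = (r + u + 1 + (a1 - b)) * (p + s + 1 - (a1 - b)) := mul_comm _ _
      _ ≤ (r + 1) * (u + 1) * ((p + 1) * (s + 1)) :=
          add_add_one_add_mul_sub_le hr hu (by linarith) (by linarith) (by linarith)
      _ = _ := mul_comm _ _

lemma two_mul_add_add_two_le {a b c : ℤ} (ha : 0 ≤ a) (hb : 0 ≤ b) (hc : 0 ≤ c) :
    2 * (a + b + 2 - c) ≤ (a + 2) * (b + 2) := by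
  nlinarith [mul_nonneg ha hb]

lemma half_div_half_mul_half_le_one {N A B : ℝ} (hA : 0 < A) (hB : 0 < B) (h : 2 * N ≤ A * B) :
    N / 2 / (A / 2 * (B / 2)) ≤ 1 := by
  rw [div_le_one (by positivity)]
  linarith

theorem stmt_11_general (l1 l2 m1 m2 a1 a2 b v1 v2 v3 : ℤ)
    (hl : l1 ≥ l2) (hl2 : l2 ≥ 0) (hm : m1 ≥ m2) (hm2 : m2 ≥ 0)
    (ha1 : 0 ≤ a1) (ha2 : 0 ≤ a2) (hb : 0 ≤ b)
    (c1 : a1 ≤ l1 - l2) (c3 : a2 + b ≤ l2 + a1)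
    (c4 : a1 + a2 ≤ m1 - m2 + b) (c5 : b ≤ m2)
    (hv1 : v1 = l1 + m1 - a1 - a2) (hv2 : v2 = l2 + m2 + a1 - b)
    (hv3 : v3 = a2 + b) :
    (((v1 - v2 + 1) * (v1 - v3 + 2) * (v2 - v3 + 1) : ℤ) : ℝ) / 2 /
        ((((l1 - l2 + 1) * (l1 + 2) * (l2 + 1) : ℤ) : ℝ) / 2 *
          ((((m1 - m2 + 1) * (m1 + 2) * (m2 + 1) : ℤ) : ℝ) / 2)) ≤ 3 := by
  subst hv1 hv2 hv3
  have hp : 0 < l1 - l2 + 1 := by linarith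
  have hs : 0 < m1 - m2 + 1 := by linarith
  have hXZ : (l1 + m1 - a1 - a2 - (l2 + m2 + a1 - b) + 1) * (l2 + m2 + a1 - b - (a2 + b) + 1) ≤
      (l1 - l2 + 1) * (m1 - m2 + 1) * ((l2 + 1) * (m2 + 1)) := by
    convert lr_outer_factors_mul_le (sub_nonneg.2 hl) hl2 (sub_nonneg.2 hm) hm2
      ha1 ha2 hb c1 c3 c4 c5 using 2 <;> ring
  have hY : 2 * (l1 + m1 - a1 - a2 - (a2 + b) + 2) ≤ (l1 + 2) * (m1 + 2) := by
    convert two_mul_add_add_two_le (c := a1 + 2 * a2 + b) (hl2.trans hl) (hm2.trans hm)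
      (by positivity) using 2
    ring
  have hA : (0 : ℤ) < (l1 - l2 + 1) * (l1 + 2) * (l2 + 1) :=
    mul_pos (mul_pos hp (by linarith)) (by linarith)
  have hB : (0 : ℤ) < (m1 - m2 + 1) * (m1 + 2) * (m2 + 1) :=
    mul_pos (mul_pos hs (by linarith)) (by linarith)
  refine (half_div_half_mul_half_le_one (by exact_mod_cast hA) (by exact_mod_cast hB) ?_).trans
    (by norm_num)
  have := mul_le_mul hXZ hY (by linarith) (by positivity)
  exact_mod_cast (by linear_combination this)

/-- The `SU(3)` relative dimension estimate: if `ν ⊂ π_λ ⊗ π_μ` appears in the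
Littlewood–Richardson decomposition (parametrized by `α₁, α₂, β ≥ 0` subject to
the LR constraints), then `d_ν/(d_λ d_μ) ≤ 3`. -/
theorem stmt_11 (l1 l2 m1 m2 a1 a2 b v1 v2 v3 : ℤ)
    (hl : l1 ≥ l2) (hl2 : l2 ≥ 0) (hm : m1 ≥ m2) (hm2 : m2 ≥ 0)
    (ha1 : 0 ≤ a1) (ha2 : 0 ≤ a2) (hb : 0 ≤ b)
    (c1 : a1 ≤ l1 - l2) (c2 : a2 ≤ l2) (c3 : a2 + b ≤ l2 + a1)
    (c4 : a1 + a2 ≤ m1 - m2 + b) (c5 : b ≤ m2) (c6 : a2 ≤ m1 - m2)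
    (hv1 : v1 = l1 + m1 - a1 - a2) (hv2 : v2 = l2 + m2 + a1 - b)
    (hv3 : v3 = a2 + b) :
    (((v1 - v2 + 1) * (v1 - v3 + 2) * (v2 - v3 + 1) : ℤ) : ℝ) / 2 /
        ((((l1 - l2 + 1) * (l1 + 2) * (l2 + 1) : ℤ) : ℝ) / 2 *
          ((((m1 - m2 + 1) * (m1 + 2) * (m2 + 1) : ℤ) : ℝ) / 2)) ≤ 3 :=
  stmt_11_general l1 l2 m1 m2 a1 a2 b v1 v2 v3 hl hl2 hm hm2 ha1 ha2 hb c1 c3 c4 c5 hv1 hv2 hv3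
end

section
/- For nonnegative reals a, b and A with 0 ≤ A ≤ min(a,b), one has (a + b - A + 1)(c + d + A + 1) ≤ 3(a+1)(b+1)(c+1)(d+1) for all nonnegative reals c, d. -/
/-!
Since `(a + 1)(b + 1) - (a + b - A + 1)(A + 1) = (a - A)(b - A) ≥ 0`, while
`c + d + A + 1 ≤ (A + 1)(c + 1)(d + 1)` for nonnegative `A, c, d`, the left-hand side is in fact
bounded by `(a + 1)(b + 1)(c + 1)(d + 1)` itself, a third of the claimed bound.
-/

lemma add_sub_add_one_mul_le {a b A : ℝ} (ha : A ≤ a) (hb : A ≤ b) :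
    (a + b - A + 1) * (A + 1) ≤ (a + 1) * (b + 1) := by
  nlinarith [mul_nonneg (sub_nonneg.2 ha) (sub_nonneg.2 hb)]

lemma add_add_add_one_le_mul {x y z : ℝ} (hx : 0 ≤ x) (hy : 0 ≤ y) (hz : 0 ≤ z) :
    x + y + z + 1 ≤ (x + 1) * (y + 1) * (z + 1) := by
  nlinarith [mul_nonneg hx hy, mul_nonneg hx hz, mul_nonneg hy hz,
    mul_nonneg (mul_nonneg hx hy) hz]

lemma mul_le_prod_add_one {a b c d A : ℝ} (hb : 0 ≤ b) (hc : 0 ≤ c) (hd : 0 ≤ d)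
    (hA0 : 0 ≤ A) (hAa : A ≤ a) (hAb : A ≤ b) :
    (a + b - A + 1) * (c + d + A + 1) ≤ (a + 1) * (b + 1) * (c + 1) * (d + 1) :=
  calc (a + b - A + 1) * (c + d + A + 1)
      _ ≤ (a + b - A + 1) * ((A + 1) * (c + 1) * (d + 1)) := by
        gcongr
        · linarith
        · linarith [add_add_add_one_le_mul hA0 hc hd]
      _ = (a + b - A + 1) * (A + 1) * ((c + 1) * (d + 1)) := by ring
      _ ≤ (a + 1) * (b + 1) * ((c + 1) * (d + 1)) :=
        mul_le_mul_of_nonneg_right (add_sub_add_one_mul_le hAa hAb) (by positivity)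
      _ = (a + 1) * (b + 1) * (c + 1) * (d + 1) := by ring

/-- The key inequality `II' ≤ 3` in the `SU(3)` dimension estimate: for
nonnegative reals `a, b, c, d` and `0 ≤ A ≤ min(a,b)`,
`(a + b - A + 1)(c + d + A + 1) ≤ 3(a+1)(b+1)(c+1)(d+1)`. -/
theorem stmt_13 (a b c d A : ℝ) (ha : 0 ≤ a) (hb : 0 ≤ b) (hc : 0 ≤ c)
    (hd : 0 ≤ d) (hA0 : 0 ≤ A) (hA : A ≤ min a b) :
    (a + b - A + 1) * (c + d + A + 1) ≤ 3 * ((a + 1) * (b + 1) * (c + 1) * (d + 1)) := by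
  obtain ⟨hAa, hAb⟩ := le_min_iff.1 hA
  calc (a + b - A + 1) * (c + d + A + 1)
      _ ≤ (a + 1) * (b + 1) * (c + 1) * (d + 1) := mul_le_prod_add_one hb hc hd hA0 hAa hAb
      _ ≤ 3 * ((a + 1) * (b + 1) * (c + 1) * (d + 1)) :=
        le_mul_of_one_le_left (by positivity) (by norm_num)
end

section
/- Let 0 < α < 1 and β ≥ max{1, 6/(α(1-α))}. Define p(x) = x^α - β·ln(1+x) for x ≥ 0 and q(x) = p(x)/x for x > 0, and let K = (β²/(α(1-α)))^{1/α}. Then p is increasing on [K, ∞) and q is decreasing on [K, ∞). -/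
/-!
On `[K, ∞)` we have `α x ^ α ≥ α K ^ α = β² / (1 - α) ≥ β`, and `x ^ (α - 1) (1 + x) ≥ x ^ α`,
so `p' x = α x ^ (α - 1) - β / (1 + x) ≥ 0`.

For `q` it suffices that `x p' x ≤ p x`, which follows from `β log (1 + x) ≤ (1 - α) x ^ α`.
The difference `g x = (1 - α) x ^ α - β log (1 + x)` is increasing on `[K, ∞)` by the same
estimate, now using `α (1 - α) K ^ α = β²`, and `g K ≥ 0` amounts to `α log (1 + K) ≤ β`, which
holds because `(1 + K) ^ α ≤ 2 K ^ α ≤ β³ / 3 ≤ exp β` once `β ≥ 6 / (α (1 - α)) ≥ 24`.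
-/

open Real Set

lemma monotoneOn_Ici_of_hasDerivAt_nonneg {f f' : ℝ → ℝ} {K : ℝ}
    (hf : ∀ x ∈ Ici K, HasDerivAt f (f' x) x) (hf' : ∀ x ∈ Ioi K, 0 ≤ f' x) :
    MonotoneOn f (Ici K) :=
  monotoneOn_of_hasDerivWithinAt_nonneg (convex_Ici K)
    (fun x hx ↦ (hf x hx).continuousAt.continuousWithinAt)
    (fun x hx ↦ (hf x (interior_subset hx)).hasDerivWithinAt)
    (by rwa [interior_Ici])

lemma antitoneOn_Ici_of_hasDerivAt_nonpos {f f' : ℝ → ℝ} {K : ℝ}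
    (hf : ∀ x ∈ Ici K, HasDerivAt f (f' x) x) (hf' : ∀ x ∈ Ioi K, f' x ≤ 0) :
    AntitoneOn f (Ici K) :=
  antitoneOn_of_hasDerivWithinAt_nonpos (convex_Ici K)
    (fun x hx ↦ (hf x hx).continuousAt.continuousWithinAt)
    (fun x hx ↦ (hf x (interior_subset hx)).hasDerivWithinAt)
    (by rwa [interior_Ici])

lemma antitoneOn_div_self {f f' : ℝ → ℝ} {K : ℝ} (hK : 0 < K)
    (hf : ∀ x ∈ Ici K, HasDerivAt f (f' x) x) (h : ∀ x ∈ Ioi K, x * f' x ≤ f x) :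
    AntitoneOn (fun x ↦ f x / x) (Ici K) := by
  refine antitoneOn_Ici_of_hasDerivAt_nonpos
    (fun x hx ↦ (hf x hx).div (hasDerivAt_id x) (hK.trans_le hx).ne') fun x hx ↦ ?_
  apply div_nonpos_of_nonpos_of_nonneg _ (sq_nonneg _)
  simp only [mul_one]
  linarith [h x hx]

lemma hasDerivAt_mul_rpow_sub_mul_log_one_add (c α β : ℝ) {x : ℝ} (hx : 0 < x) :
    HasDerivAt (fun x ↦ c * x ^ α - β * log (1 + x))
      (c * (α * x ^ (α - 1)) - β / (1 + x)) x := by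
  have h := ((hasDerivAt_rpow_const (p := α) (Or.inl hx.ne')).const_mul c).sub
    ((((hasDerivAt_id' x).const_add 1).log (by positivity)).const_mul β)
  rwa [mul_one_div] at h

lemma monotoneOn_mul_rpow_sub_mul_log_one_add {c α β K : ℝ} (hK : 0 < K) (hc : 0 ≤ c)
    (hα : 0 ≤ α) (hβ : β ≤ c * α * K ^ α) :
    MonotoneOn (fun x ↦ c * x ^ α - β * log (1 + x)) (Ici K) := by
  refine monotoneOn_Ici_of_hasDerivAt_nonneg
    (fun x hx ↦ hasDerivAt_mul_rpow_sub_mul_log_one_add c α β (hK.trans_le hx)) fun x hx ↦ ?_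
  have hx0 : 0 < x := hK.trans hx
  have hxα : x ^ (α - 1) * x = x ^ α := by rw [← rpow_add_one hx0.ne', sub_add_cancel]
  have hKx : K ^ α ≤ x ^ α := rpow_le_rpow hK.le hx.le hα
  rw [sub_nonneg, div_le_iff₀ (by positivity)]
  calc β ≤ c * α * (x ^ (α - 1) * x) := by rw [hxα]; nlinarith [mul_nonneg hc hα]
    _ ≤ c * (α * x ^ (α - 1)) * (1 + x) := by
      have : 0 ≤ c * α * x ^ (α - 1) := by positivity
      nlinarith

lemma one_add_rpow_le_two_mul_rpow {α K : ℝ} (hα0 : 0 ≤ α) (hα1 : α ≤ 1) (hK : 1 ≤ K) :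
    (1 + K) ^ α ≤ 2 * K ^ α :=
  calc (1 + K) ^ α ≤ (2 * K) ^ α := by gcongr; linarith
    _ = 2 ^ α * K ^ α := mul_rpow zero_le_two (by linarith)
    _ ≤ 2 * K ^ α := by
      gcongr
      exact rpow_le_self_of_one_le one_le_two hα1

lemma pow_three_div_three_le_exp {β : ℝ} (hβ : 8 ≤ β) : β ^ 3 / 3 ≤ exp β :=
  calc β ^ 3 / 3 ≤ β ^ 4 / 24 := by nlinarith [pow_pos (by linarith : (0 : ℝ) < β) 3]
    _ ≤ exp β := by simpa [Nat.factorial] using pow_div_factorial_le_exp β (by linarith) 4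

lemma twentyfour_le_six_div_mul_one_sub {α : ℝ} (hα0 : 0 < α) (hα1 : α < 1) :
    24 ≤ 6 / (α * (1 - α)) := by
  rw [le_div_iff₀ (mul_pos hα0 (by linarith))]
  nlinarith [sq_nonneg (α - 1 / 2)]

lemma mul_log_one_add_le_one_sub_mul_rpow {α β K : ℝ} (hα0 : 0 < α) (hα1 : α < 1)
    (hβ : 6 / (α * (1 - α)) ≤ β) (hK : 1 ≤ K) (hKα : K ^ α = β ^ 2 / (α * (1 - α))) :
    β * log (1 + K) ≤ (1 - α) * K ^ α := by
  have h1α : 0 < 1 - α := sub_pos.2 hα1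
  have hβ8 : 8 ≤ β := by linarith [twentyfour_le_six_div_mul_one_sub hα0 hα1]
  have hcβ : 1 / (α * (1 - α)) ≤ β / 6 := by
    rw [div_le_iff₀ (by positivity)] at hβ ⊢; linarith
  have hlog : α * log (1 + K) ≤ β := by
    rw [← log_rpow (by linarith), ← log_exp β]
    apply log_le_log (by positivity)
    calc (1 + K) ^ α ≤ 2 * K ^ α := one_add_rpow_le_two_mul_rpow hα0.le hα1.le hK
      _ = 2 * β ^ 2 * (1 / (α * (1 - α))) := by rw [hKα]; ring
      _ ≤ 2 * β ^ 2 * (β / 6) := by gcongr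
      _ = β ^ 3 / 3 := by ring
      _ ≤ exp β := pow_three_div_three_le_exp hβ8
  rw [hKα, show (1 - α) * (β ^ 2 / (α * (1 - α))) = β * (β / α) by field_simp [h1α.ne']]
  gcongr
  rwa [le_div_iff₀ hα0, mul_comm]

lemma mul_deriv_le_rpow_sub_mul_log_one_add {α β x : ℝ} (hx : 0 < x) (hβ : 0 ≤ β)
    (h : β * log (1 + x) ≤ (1 - α) * x ^ α) :
    x * (α * x ^ (α - 1) - β / (1 + x)) ≤ x ^ α - β * log (1 + x) := by
  have hxα : x * x ^ (α - 1) = x ^ α := by rw [mul_comm, ← rpow_add_one hx.ne', sub_add_cancel]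
  have hβx : 0 ≤ x * (β / (1 + x)) := by positivity
  calc x * (α * x ^ (α - 1) - β / (1 + x)) ≤ α * (x * x ^ (α - 1)) := by nlinarith
    _ ≤ x ^ α - β * log (1 + x) := by rw [hxα]; linarith

/-- For `0 < α < 1` and `β ≥ max{1, 6/(α(1-α))}`, the function
`p(x) = x^α - β ln(1+x)` is increasing, and `q(x) = p(x)/x` is decreasing,
on `[K, ∞)` where `K = (β²/(α(1-α)))^{1/α}`. -/
theorem stmt_14 (α β K : ℝ) (hα0 : 0 < α) (hα1 : α < 1)
    (hβ : max 1 (6 / (α * (1 - α))) ≤ β)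
    (hK : K = (β ^ 2 / (α * (1 - α))) ^ (1 / α)) :
    MonotoneOn (fun x : ℝ => x ^ α - β * Real.log (1 + x)) (Set.Ici K) ∧
    AntitoneOn (fun x : ℝ => (x ^ α - β * Real.log (1 + x)) / x) (Set.Ici K) := by
  have h1α : 0 < 1 - α := sub_pos.2 hα1
  have hc : 0 < α * (1 - α) := mul_pos hα0 h1α
  have hβ1 : 1 ≤ β := le_of_max_le_left hβ
  have hβ6 : 6 / (α * (1 - α)) ≤ β := le_of_max_le_right hβ
  have hKα : K ^ α = β ^ 2 / (α * (1 - α)) := by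
    rw [hK, ← rpow_mul (by positivity), one_div_mul_cancel hα0.ne', rpow_one]
  have hK1 : 1 ≤ K := by
    rw [hK]
    refine one_le_rpow ?_ (by positivity)
    rw [le_div_iff₀ hc]; nlinarith
  have hK0 : 0 < K := by linarith
  have hβK : β ≤ (1 - α) * α * K ^ α := by
    rw [hKα, show (1 - α) * α * (β ^ 2 / (α * (1 - α))) = β ^ 2 by field_simp [h1α.ne']]
    nlinarith
  have hp := monotoneOn_mul_rpow_sub_mul_log_one_add hK0 zero_le_one hα0.le
    (hβK.trans (by gcongr; linarith))
  have hg := monotoneOn_mul_rpow_sub_mul_log_one_add hK0 h1α.le hα0.le hβK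
  have hgK := mul_log_one_add_le_one_sub_mul_rpow hα0 hα1 hβ6 hK1 hKα
  refine ⟨by simpa only [one_mul] using hp, antitoneOn_div_self hK0 (fun x hx ↦ by
    simpa only [one_mul] using hasDerivAt_mul_rpow_sub_mul_log_one_add 1 α β (hK0.trans_le hx))
    fun x hx ↦ mul_deriv_le_rpow_sub_mul_log_one_add (hK0.trans hx) (by linarith) ?_⟩
  have hgx := hg self_mem_Ici (mem_Ici.2 hx.le) hx.le
  dsimp only at hgx
  linarith
end

section
/- Let 0 < α < 1, β ≥ max{1, 6/(α(1-α))}, p(x) = x^α - β ln(1+x), q(x) = p(x)/x, K = (β²/(α(1-α)))^{1/α}. Let τ : S → [0,∞) be a function on a set S with a 'subadditivity relation': whenever σ is related to the pair (π, π'), τ(σ) ≤ τ(π) + τ(π'). Define ω(π) = e^{p(τ(π))} and M = max{ e^{p(t)-p(s)-p(r)} : t, s, r ∈ [0, 2K] ∩ ℤ }. Then for all related triples, ω(σ) ≤ M² ω(π) ω(π'). -/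
/-!
Write `L = log M`; the claim is `p t ≤ 2 L + p s + p r` whenever `t ≤ s + r`. On `[K, ∞)` the
choice of `K` forces `β log (1 + x) ≤ (1 - α) x ^ α`, which makes `p` nonnegative, increasing and
subadditive there. Below `K`, replacing an argument by its floor costs at most `1` or `β log 2`,
while differences of `p` at integers of `[0, 2K]` are at most `L`, and the triple `(0, 1, 2)`
shows `L ≥ 2 β log 2 + 1`, enough to absorb the rounding errors. It remains to split according to
which of `s`, `r`, `t` lie below `K`; when `r < K` and `K ≤ s, t` one uses
`p t ≤ p (s + K) ≤ p s + p K` and `p K ≤ p ⌊2K⌋ ≤ L + p ⌊r⌋`.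
-/

section

open Real Set

theorem Real.rpow_add_le_rpow_add_mul {α x y : ℝ} (hα0 : 0 ≤ α) (hα1 : α ≤ 1) (hx : 0 < x)
    (hy : 0 ≤ y) : (x + y) ^ α ≤ x ^ α + α * x ^ (α - 1) * y := by
  have hyx : 0 ≤ y / x := div_nonneg hy hx.le
  have hbern : (1 + y / x) ^ α ≤ 1 + α * (y / x) :=
    rpow_one_add_le_one_add_mul_self (by linarith) hα0 hα1
  calc (x + y) ^ α = x ^ α * (1 + y / x) ^ α := by
        rw [← mul_rpow hx.le (by positivity)]; congr 1; field_simp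
    _ ≤ x ^ α * (1 + α * (y / x)) := by gcongr
    _ = x ^ α + α * x ^ (α - 1) * y := by rw [rpow_sub_one hx.ne']; field_simp

theorem Real.three_mul_log_le_self {β : ℝ} (hβ : 24 ≤ β) : 3 * log β ≤ β := by
  have hsq : √β ^ 2 = β := sq_sqrt (by linarith)
  have hlog : log β = 2 * log √β := by rw [log_sqrt (by linarith)]; ring
  have h := log_le_sub_one_of_pos (x := √β) (by positivity)
  nlinarith [sq_nonneg (√β - 5)]

noncomputable def logWeight (α β x : ℝ) : ℝ := x ^ α - β * log (1 + x)

noncomputable def weightThreshold (α β : ℝ) : ℝ := (β ^ 2 / (α * (1 - α))) ^ (1 / α)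

variable {α β : ℝ}

local notation "p" => logWeight α β
local notation "K" => weightThreshold α β

theorem logWeight_zero (hα : α ≠ 0) : p 0 = 0 := by
  simp [logWeight, zero_rpow hα]

theorem logWeight_le_floor_add_one (hα0 : 0 ≤ α) (hα1 : α ≤ 1) (hβ : 0 ≤ β) {x : ℝ}
    (hx : 0 ≤ x) : p x ≤ p ⌊x⌋ + 1 := by
  have hn : (0 : ℝ) ≤ ⌊x⌋ := by exact_mod_cast Int.floor_nonneg.mpr hx
  have hpow : x ^ α ≤ (⌊x⌋ : ℝ) ^ α + 1 :=
    calc x ^ α ≤ ((⌊x⌋ : ℝ) + 1) ^ α := by gcongr; exact (Int.lt_floor_add_one x).le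
      _ ≤ (⌊x⌋ : ℝ) ^ α + 1 ^ α := rpow_add_le_add_rpow hn zero_le_one hα0 hα1
      _ = (⌊x⌋ : ℝ) ^ α + 1 := by rw [one_rpow]
  have hlog : log (1 + ⌊x⌋) ≤ log (1 + x) := by
    gcongr
    exact Int.floor_le x
  unfold logWeight
  nlinarith

theorem logWeight_floor_le (hα : 0 ≤ α) (hβ : 0 ≤ β) {x : ℝ} (hx : 0 ≤ x) :
    p ⌊x⌋ ≤ p x + β * log 2 := by
  have hn : (0 : ℝ) ≤ ⌊x⌋ := by exact_mod_cast Int.floor_nonneg.mpr hx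
  have hpow : (⌊x⌋ : ℝ) ^ α ≤ x ^ α := by gcongr; exact Int.floor_le x
  have hlog : log (1 + x) ≤ log 2 + log (1 + ⌊x⌋) := by
    rw [← log_mul two_ne_zero (by positivity)]
    gcongr
    linarith [Int.lt_floor_add_one x]
  unfold logWeight
  nlinarith

theorem twentyFour_le_of_six_div_le (hα0 : 0 < α) (hα1 : α < 1)
    (hβ : 6 / (α * (1 - α)) ≤ β) : 24 ≤ β := by
  refine le_trans ?_ hβ
  rw [le_div_iff₀ (by nlinarith)]
  nlinarith [sq_nonneg (2 * α - 1)]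

theorem weightThreshold_rpow (hα0 : 0 < α) (hα1 : α < 1) :
    K ^ α = β ^ 2 / (α * (1 - α)) := by
  have hc : 0 < α * (1 - α) := by nlinarith
  rw [weightThreshold, one_div, rpow_inv_rpow (by positivity) hα0.ne']

theorem one_le_weightThreshold (hα0 : 0 < α) (hα1 : α < 1) (hβ : 6 / (α * (1 - α)) ≤ β) :
    1 ≤ K := by
  have hc : 0 < α * (1 - α) := by nlinarith
  have h24 := twentyFour_le_of_six_div_le hα0 hα1 hβ
  rw [← rpow_le_rpow_iff zero_le_one (by unfold weightThreshold; positivity) hα0, one_rpow,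
    weightThreshold_rpow hα0 hα1, le_div_iff₀ hc]
  nlinarith

theorem div_le_rpow_of_weightThreshold_le (hα0 : 0 < α) (hα1 : α < 1)
    (hβ : 6 / (α * (1 - α)) ≤ β) {x : ℝ} (hx : K ≤ x) :
    β ^ 2 / (α * (1 - α)) ≤ x ^ α := by
  rw [← weightThreshold_rpow hα0 hα1]
  have hK := one_le_weightThreshold hα0 hα1 hβ
  gcongr

theorem mul_log_one_add_le_of_weightThreshold_le (hα0 : 0 < α) (hα1 : α < 1)
    (hβ : 6 / (α * (1 - α)) ≤ β) {x : ℝ} (hx : K ≤ x) :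
    β * log (1 + x) ≤ (1 - α) * x ^ α := by
  have hc : 0 < α * (1 - α) := by nlinarith
  have h24 := twentyFour_le_of_six_div_le hα0 hα1 hβ
  have hx1 : 1 ≤ x := (one_le_weightThreshold hα0 hα1 hβ).trans hx
  set u₀ := β ^ 2 / (α * (1 - α)) with hu₀
  set u := x ^ α with hu
  have hu₀0 : 0 < u₀ := by positivity
  have hu₀u : u₀ ≤ u := div_le_rpow_of_weightThreshold_le hα0 hα1 hβ hx
  have hv : 1 ≤ u / u₀ := by rwa [one_le_div hu₀0]
  -- tangent line of `log` at `u₀`: `α log (1 + x) ≤ α log 2 + log u₀ + u / u₀ - 1 ≤ β u / u₀`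
  have hlog_x : α * log (1 + x) ≤ α * log 2 + log u := by
    have : log (1 + x) ≤ log 2 + log x := by
      rw [← log_mul two_ne_zero (by positivity)]; gcongr; linarith
    rw [hu, log_rpow (by positivity)]
    nlinarith
  have hlog_u : log u ≤ log u₀ + (u / u₀ - 1) := by
    have := log_le_sub_one_of_pos (x := u / u₀) (by positivity)
    rw [log_div (by positivity) hu₀0.ne'] at this
    linarith
  have hlog_u₀ : α * log 2 + log u₀ ≤ β := by
    have hu₀β : u₀ ≤ β ^ 3 / 6 := by
      rw [div_le_iff₀ hc] at hβ
      rw [hu₀, div_le_div_iff₀ hc (by norm_num)]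
      nlinarith
    have h1 : log u₀ ≤ 3 * log β - log 6 := by
      have := log_le_log hu₀0 hu₀β
      rwa [log_div (by positivity : β ^ 3 ≠ 0) (by norm_num), log_pow, Nat.cast_ofNat] at this
    have h2 : α * log 2 ≤ log 6 := by
      have := log_le_log (by norm_num : (0 : ℝ) < 2) (by norm_num : (2 : ℝ) ≤ 6)
      nlinarith [log_nonneg (by norm_num : (1 : ℝ) ≤ 2)]
    linarith [three_mul_log_le_self h24]
  have hkey : α * log (1 + x) ≤ β * (u / u₀) := by nlinarith
  have hrhs : (1 - α) * u = β / α * (β * (u / u₀)) := by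
    rw [hu₀]; field_simp
  rw [hrhs]
  calc β * log (1 + x) = β / α * (α * log (1 + x)) := by field_simp
    _ ≤ β / α * (β * (u / u₀)) := by gcongr

theorem hasDerivAt_logWeight {x : ℝ} (hx : 0 < x) :
    HasDerivAt p (α * x ^ (α - 1) - β * (1 + x)⁻¹) x := by
  have hlog : HasDerivAt (fun y => log (1 + y)) (1 + x)⁻¹ x := by
    simpa using ((hasDerivAt_id x).const_add 1).log (by positivity)
  exact (hasDerivAt_rpow_const (Or.inl hx.ne')).sub (hlog.const_mul β)

theorem monotoneOn_logWeight (hα0 : 0 < α) (hα1 : α < 1) (hβ : 6 / (α * (1 - α)) ≤ β) :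
    MonotoneOn p (Ici K) := by
  have hK := one_le_weightThreshold hα0 hα1 hβ
  have h24 := twentyFour_le_of_six_div_le hα0 hα1 hβ
  have hderiv : ∀ x ∈ Ici K, HasDerivAt p (α * x ^ (α - 1) - β * (1 + x)⁻¹) x :=
    fun x hx => hasDerivAt_logWeight (by linarith [mem_Ici.mp hx])
  refine monotoneOn_of_hasDerivWithinAt_nonneg (convex_Ici _)
    (fun x hx => (hderiv x hx).continuousAt.continuousWithinAt)
    (fun x hx => (hderiv x (interior_subset hx)).hasDerivWithinAt) fun x hx => ?_
  have hxK : K ≤ x := interior_subset (s := Ici _) hx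
  have hx0 : 0 < x := by linarith
  -- `α x ^ α ≥ α K ^ α = β ^ 2 / (1 - α) ≥ β`, and `α x ^ (α - 1) (1 + x) ≥ α x ^ α`
  have hβle : β ≤ α * x ^ α := by
    have := div_le_rpow_of_weightThreshold_le hα0 hα1 hβ hxK
    rw [div_le_iff₀ (by nlinarith)] at this
    nlinarith
  have hxα : x ^ (α - 1) * x = x ^ α := by rw [rpow_sub_one hx0.ne', div_mul_cancel₀ _ hx0.ne']
  rw [sub_nonneg, ← div_eq_mul_inv, div_le_iff₀ (by linarith)]
  nlinarith [rpow_nonneg hx0.le (α - 1)]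

theorem logWeight_nonneg (hα0 : 0 < α) (hα1 : α < 1) (hβ : 6 / (α * (1 - α)) ≤ β) {x : ℝ}
    (hx : K ≤ x) : 0 ≤ p x := by
  have hlog := mul_log_one_add_le_of_weightThreshold_le hα0 hα1 hβ hx
  have hpow : 0 ≤ x ^ α := rpow_nonneg (by linarith [one_le_weightThreshold hα0 hα1 hβ]) α
  unfold logWeight
  nlinarith

theorem logWeight_add_le (hα0 : 0 < α) (hα1 : α < 1) (hβ : 6 / (α * (1 - α)) ≤ β) {x y : ℝ}
    (hx : K ≤ x) (hy : K ≤ y) : p (x + y) ≤ p x + p y := by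
  wlog hyx : y ≤ x generalizing x y
  · rw [add_comm x, add_comm (p x)]
    exact this hy hx (by linarith)
  have hK := one_le_weightThreshold hα0 hα1 hβ
  have h24 := twentyFour_le_of_six_div_le hα0 hα1 hβ
  have hy0 : 0 < y := by linarith
  -- concavity of `t ↦ t ^ α` at `x`, then `x ^ (α - 1) ≤ y ^ (α - 1)`
  have hpow : (x + y) ^ α ≤ x ^ α + α * y ^ α :=
    calc (x + y) ^ α ≤ x ^ α + α * x ^ (α - 1) * y :=
          rpow_add_le_rpow_add_mul hα0.le hα1.le (by linarith) hy0.le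
      _ ≤ x ^ α + α * y ^ (α - 1) * y := by
          gcongr x ^ α + α * ?_ * y
          exact rpow_le_rpow_of_nonpos hy0 hyx (by linarith)
      _ = x ^ α + α * y ^ α := by rw [rpow_sub_one hy0.ne']; field_simp
  have hlog : log (1 + x) ≤ log (1 + (x + y)) := log_le_log (by linarith) (by linarith)
  have := mul_log_one_add_le_of_weightThreshold_le hα0 hα1 hβ hy
  unfold logWeight
  nlinarith

/-- `L` bounds `f a - f b - f c` over the integers `a, b, c` of `[0, B]`, written as floors of
points of `[0, B]`. -/
def GridDefectBound (f : ℝ → ℝ) (B L : ℝ) : Prop :=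
  ∀ a ∈ Icc 0 B, ∀ b ∈ Icc 0 B, ∀ c ∈ Icc 0 B, f ⌊a⌋ - f ⌊b⌋ - f ⌊c⌋ ≤ L

namespace GridDefectBound

variable {f : ℝ → ℝ} {B L : ℝ}

theorem sub_le (h : GridDefectBound f B L) (hf : f 0 = 0) {a b : ℝ} (ha : a ∈ Icc 0 B)
    (hb : b ∈ Icc 0 B) : f ⌊a⌋ - f ⌊b⌋ ≤ L := by
  have := h a ha b hb 0 ⟨le_rfl, ha.1.trans ha.2⟩
  simpa [hf] using this

theorem le (h : GridDefectBound f B L) (hf : f 0 = 0) {a : ℝ} (ha : a ∈ Icc 0 B) :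
    f ⌊a⌋ ≤ L := by
  simpa [hf] using h.sub_le hf ha ⟨le_rfl, ha.1.trans ha.2⟩

end GridDefectBound

theorem GridDefectBound.two_mul_log_two_add_one_le (hα0 : 0 < α) (hα1 : α < 1)
    (hβ : 6 / (α * (1 - α)) ≤ β) {L : ℝ} (h : GridDefectBound p (2 * K) L) :
    2 * β * log 2 + 1 ≤ L := by
  have hK := one_le_weightThreshold hα0 hα1 hβ
  have h24 := twentyFour_le_of_six_div_le hα0 hα1 hβ
  have h012 := h 0 ⟨le_rfl, by linarith⟩ 1 ⟨zero_le_one, by linarith⟩ 2 ⟨zero_le_two, by linarith⟩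
  have h2α : (2 : ℝ) ^ α ≤ 2 := by
    simpa using rpow_le_rpow_of_exponent_le one_le_two hα1.le
  have hlog3 : log 2 + 1 / 3 ≤ log 3 := by
    have := log_le_sub_one_of_pos (show (0 : ℝ) < 2 / 3 by norm_num)
    rw [log_div two_ne_zero three_ne_zero] at this
    linarith
  simp only [Int.floor_zero, Int.floor_one, Int.floor_ofNat, Int.cast_zero, Int.cast_one,
    Int.cast_ofNat, logWeight, zero_rpow hα0.ne', one_rpow] at h012
  norm_num at h012
  nlinarith [mul_le_mul_of_nonneg_left hlog3 (by linarith : (0 : ℝ) ≤ β)]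

section Cases

variable {L s r t : ℝ}

theorem logWeight_le_of_le_add_small_small (hα0 : 0 < α) (hα1 : α < 1)
    (hβ : 6 / (α * (1 - α)) ≤ β) (hL : GridDefectBound p (2 * K) L)
    (hs0 : 0 ≤ s) (hr0 : 0 ≤ r) (ht0 : 0 ≤ t) (hs : s ≤ K) (hr : r ≤ K) (hts : t ≤ s + r) :
    p t ≤ 2 * L + p s + p r := by
  have hβ0 : 0 ≤ β := by linarith [twentyFour_le_of_six_div_le hα0 hα1 hβ]
  have hgrid := hL t ⟨ht0, by linarith⟩ s ⟨hs0, by linarith⟩ r ⟨hr0, by linarith⟩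
  have := hL.two_mul_log_two_add_one_le hα0 hα1 hβ
  linarith [logWeight_le_floor_add_one hα0.le hα1.le hβ0 ht0,
    logWeight_floor_le hα0.le hβ0 hs0, logWeight_floor_le hα0.le hβ0 hr0]

theorem logWeight_le_of_le_add_large_small (hα0 : 0 < α) (hα1 : α < 1)
    (hβ : 6 / (α * (1 - α)) ≤ β) (hL : GridDefectBound p (2 * K) L)
    (hr0 : 0 ≤ r) (ht0 : 0 ≤ t) (hs : K ≤ s) (hr : r ≤ K) (hts : t ≤ s + r) :
    p t ≤ 2 * L + p s + p r := by
  have hK := one_le_weightThreshold hα0 hα1 hβ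
  have hβ0 : 0 ≤ β := by linarith [twentyFour_le_of_six_div_le hα0 hα1 hβ]
  have hp0 := logWeight_zero (β := β) hα0.ne'
  have hL1 := hL.two_mul_log_two_add_one_le hα0 hα1 hβ
  have hr_floor := logWeight_floor_le hα0.le hβ0 hr0
  have hβlog2 : 0 ≤ β * log 2 := mul_nonneg hβ0 (log_nonneg one_le_two)
  have hs_nonneg := logWeight_nonneg hα0 hα1 hβ hs
  rcases le_total t K with ht | ht
  · have := hL.sub_le hp0 ⟨ht0, by linarith⟩ ⟨hr0, by linarith⟩
    linarith [logWeight_le_floor_add_one hα0.le hα1.le hβ0 ht0]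
  · have hfloor : K ≤ ⌊2 * K⌋ := by linarith [Int.sub_one_lt_floor (2 * K)]
    have hmono := monotoneOn_logWeight hα0 hα1 hβ
    have h1 : p t ≤ p (s + K) := hmono (mem_Ici.mpr ht) (mem_Ici.mpr (by linarith)) (by linarith)
    have h2 := logWeight_add_le hα0 hα1 hβ hs le_rfl
    have h3 : p K ≤ p ⌊2 * K⌋ := hmono (mem_Ici.mpr le_rfl) (mem_Ici.mpr hfloor) hfloor
    have h4 := hL.sub_le hp0 ⟨by linarith, le_rfl⟩ ⟨hr0, by linarith⟩
    linarith

theorem logWeight_le_of_le_add_large_large (hα0 : 0 < α) (hα1 : α < 1)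
    (hβ : 6 / (α * (1 - α)) ≤ β) (hL : GridDefectBound p (2 * K) L)
    (ht0 : 0 ≤ t) (hs : K ≤ s) (hr : K ≤ r) (hts : t ≤ s + r) :
    p t ≤ 2 * L + p s + p r := by
  have hK := one_le_weightThreshold hα0 hα1 hβ
  have hβ0 : 0 ≤ β := by linarith [twentyFour_le_of_six_div_le hα0 hα1 hβ]
  have hL1 := hL.two_mul_log_two_add_one_le hα0 hα1 hβ
  have hβlog2 : 0 ≤ β * log 2 := mul_nonneg hβ0 (log_nonneg one_le_two)
  have hs_nonneg := logWeight_nonneg hα0 hα1 hβ hs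
  have hr_nonneg := logWeight_nonneg hα0 hα1 hβ hr
  rcases le_total t K with ht | ht
  · have := hL.le (logWeight_zero hα0.ne') ⟨ht0, by linarith⟩
    linarith [logWeight_le_floor_add_one hα0.le hα1.le hβ0 ht0]
  · have h1 : p t ≤ p (s + r) :=
      monotoneOn_logWeight hα0 hα1 hβ (mem_Ici.mpr ht) (mem_Ici.mpr (by linarith)) hts
    linarith [logWeight_add_le hα0 hα1 hβ hs hr]

theorem logWeight_le_of_le_add (hα0 : 0 < α) (hα1 : α < 1) (hβ : 6 / (α * (1 - α)) ≤ β)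
    (hL : GridDefectBound p (2 * K) L)
    (hs0 : 0 ≤ s) (hr0 : 0 ≤ r) (ht0 : 0 ≤ t) (hts : t ≤ s + r) :
    p t ≤ 2 * L + p s + p r := by
  rcases le_total s K with hs | hs <;> rcases le_total r K with hr | hr
  · exact logWeight_le_of_le_add_small_small hα0 hα1 hβ hL hs0 hr0 ht0 hs hr hts
  · have := logWeight_le_of_le_add_large_small hα0 hα1 hβ hL hs0 ht0 hr hs (by linarith)
    linarith
  · exact logWeight_le_of_le_add_large_small hα0 hα1 hβ hL hr0 ht0 hs hr hts
  · exact logWeight_le_of_le_add_large_large hα0 hα1 hβ hL ht0 hs hr hts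

end Cases

theorem exp_sub_le_sSup (f : ℝ → ℝ) {B a b c : ℝ} (ha : a ∈ Icc 0 B) (hb : b ∈ Icc 0 B)
    (hc : c ∈ Icc 0 B) :
    exp (f ⌊a⌋ - f ⌊b⌋ - f ⌊c⌋) ≤ sSup {y : ℝ | ∃ t s r : ℤ, 0 ≤ t ∧ (t : ℝ) ≤ B ∧
      0 ≤ s ∧ (s : ℝ) ≤ B ∧ 0 ≤ r ∧ (r : ℝ) ≤ B ∧ y = exp (f t - f s - f r)} := by
  have hfin : ((fun n : ℤ × ℤ × ℤ => exp (f n.1 - f n.2.1 - f n.2.2)) ''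
      (Icc 0 ⌊B⌋ ×ˢ Icc 0 ⌊B⌋ ×ˢ Icc 0 ⌊B⌋)).Finite :=
    ((finite_Icc _ _).prod ((finite_Icc _ _).prod (finite_Icc _ _))).image _
  refine le_csSup (hfin.bddAbove.mono ?_) ?_
  · rintro y ⟨t, s, r, ht0, htB, hs0, hsB, hr0, hrB, rfl⟩
    exact ⟨(t, s, r), ⟨⟨ht0, Int.le_floor.mpr htB⟩, ⟨hs0, Int.le_floor.mpr hsB⟩,
      ⟨hr0, Int.le_floor.mpr hrB⟩⟩, rfl⟩
  · exact ⟨⌊a⌋, ⌊b⌋, ⌊c⌋, Int.floor_nonneg.mpr ha.1, (Int.floor_le a).trans ha.2,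
      Int.floor_nonneg.mpr hb.1, (Int.floor_le b).trans hb.2,
      Int.floor_nonneg.mpr hc.1, (Int.floor_le c).trans hc.2, rfl⟩

theorem exp_logWeight_le_sq_mul (hα0 : 0 < α) (hα1 : α < 1) (hβ : 6 / (α * (1 - α)) ≤ β)
    {M : ℝ} (hM : ∀ a ∈ Icc 0 (2 * K), ∀ b ∈ Icc 0 (2 * K), ∀ c ∈ Icc 0 (2 * K),
      exp (p ⌊a⌋ - p ⌊b⌋ - p ⌊c⌋) ≤ M)
    {s r t : ℝ} (hs0 : 0 ≤ s) (hr0 : 0 ≤ r) (ht0 : 0 ≤ t) (hts : t ≤ s + r) :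
    exp (p t) ≤ M ^ 2 * exp (p s) * exp (p r) := by
  have h0 : (0 : ℝ) ∈ Icc 0 (2 * K) := ⟨le_rfl, by linarith [one_le_weightThreshold hα0 hα1 hβ]⟩
  have hM0 : 0 < M := (exp_pos _).trans_le (hM 0 h0 0 h0 0 h0)
  have hL : GridDefectBound p (2 * K) (log M) :=
    fun a ha b hb c hc => (le_log_iff_exp_le hM0).mpr (hM a ha b hb c hc)
  calc exp (p t)
      ≤ exp (2 * log M + p s + p r) :=
        exp_le_exp.mpr (logWeight_le_of_le_add hα0 hα1 hβ hL hs0 hr0 ht0 hts)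
    _ = M ^ 2 * exp (p s) * exp (p r) := by
        rw [exp_add, exp_add, two_mul, exp_add, exp_log hM0]; ring

end

/-- Abstract version of Lemma B.2: given a ternary relation modelling
`σ ⊂ π ⊗ π'`, a subadditive "length" `τ ≥ 0`, `p(x) = x^α - β ln(1+x)`,
`K = (β²/(α(1-α)))^{1/α}` and
`M = max{e^{p(t)-p(s)-p(r)} : t,s,r ∈ [0,2K] ∩ ℤ}`, the weight
`ω = e^{p∘τ}` satisfies `ω(σ) ≤ M² ω(π) ω(π')` on related triples. -/
theorem stmt_15 {S : Type*} (Rel : S → S → S → Prop) (τ : S → ℝ)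
    (hτ0 : ∀ x, 0 ≤ τ x)
    (α β : ℝ) (hα0 : 0 < α) (hα1 : α < 1)
    (hβ : max 1 (6 / (α * (1 - α))) ≤ β)
    (p : ℝ → ℝ) (hp : ∀ x, p x = x ^ α - β * Real.log (1 + x))
    (K : ℝ) (hK : K = (β ^ 2 / (α * (1 - α))) ^ (1 / α))
    (hsub : ∀ σ π π', Rel σ π π' → τ σ ≤ τ π + τ π')
    (M : ℝ)
    (hM : M = sSup {y : ℝ | ∃ t s r : ℤ, 0 ≤ t ∧ (t : ℝ) ≤ 2 * K ∧
      0 ≤ s ∧ (s : ℝ) ≤ 2 * K ∧ 0 ≤ r ∧ (r : ℝ) ≤ 2 * K ∧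
      y = Real.exp (p t - p s - p r)}) :
    ∀ σ π π', Rel σ π π' →
      Real.exp (p (τ σ)) ≤ M ^ 2 * Real.exp (p (τ π)) * Real.exp (p (τ π')) := by
  intro σ π π' hrel
  obtain rfl : p = logWeight α β := funext hp
  subst hK hM
  exact exp_logWeight_le_sq_mul hα0 hα1 ((le_max_right _ _).trans hβ)
    (fun a ha b hb c hc => exp_sub_le_sSup _ ha hb hc) (hτ0 π) (hτ0 π') (hτ0 σ) (hsub _ _ _ hrel)
end

section
/- Let 0 < α < 1 and β ≥ max{1, 6/(α(1-α))}. There exists a constant M ≥ 1 (depending only on α and β) such that for all nonnegative reals s, t, u with u ≤ s + t: e^{u^α}/(e^{s^α} e^{t^α}) ≤ M² · (1+u)^β/((1+s)^β (1+t)^β). -/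
/-!
Write `p(x) = x ^ α - β log (1 + x)`; the claim is `p u ≤ p s + p t + 2 log M`. Since
`log (1 + x) = o(x ^ α)`, `β log (1 + x) ≤ c x ^ α + D` for every `c > 0`. Assume `t ≤ s`.
If `u ≤ s / 2`, then `u ^ α ≤ 2 ^ (-α) s ^ α` and the gap `(1 - 2 ^ (-α)) s ^ α` absorbs
`β log (1 + s)`; if `s / 2 < u ≤ s`, then `log (1 + s) ≤ log 2 + log (1 + u)`. If `s < u`,
concavity gives `u ^ α ≤ s ^ α + α t ^ α`, and the gap `(1 - α) t ^ α` absorbs `β log (1 + t)`.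
-/

open Real

noncomputable def weightLog (α β x : ℝ) : ℝ := x ^ α - β * log (1 + x)

lemma log_one_add_le_one_add_rpow_div {ε x : ℝ} (hε0 : 0 < ε) (hε1 : ε ≤ 1)
    (hx : 0 ≤ x) : log (1 + x) ≤ (1 + x ^ ε) / ε := by
  calc log (1 + x) ≤ (1 + x) ^ ε / ε := log_le_rpow_div (by linarith) hε0
    _ ≤ (1 + x ^ ε) / ε := by
      gcongr
      simpa using rpow_add_le_add_rpow zero_le_one hx hε0.le hε1

lemma exists_mul_log_one_add_le {α β c : ℝ} (hα0 : 0 < α) (hα2 : α ≤ 2) (hβ : 0 ≤ β)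
    (hc : 0 < c) : ∃ D, 0 ≤ D ∧ ∀ x, 0 ≤ x → β * log (1 + x) ≤ c * x ^ α + D := by
  set A := 2 * β / α
  refine ⟨A + A ^ 2 / (4 * c), by positivity, fun x hx => ?_⟩
  set y := x ^ (α / 2)
  have hy : y ^ 2 = x ^ α := by
    rw [← rpow_natCast, ← rpow_mul hx]
    norm_num
  have hlog : β * log (1 + x) ≤ A * (1 + y) := by
    calc β * log (1 + x) ≤ β * ((1 + y) / (α / 2)) := by
          gcongr
          exact log_one_add_le_one_add_rpow_div (by positivity) (by linarith) hx
      _ = A * (1 + y) := by ring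
  have hAM : A * y ≤ c * y ^ 2 + A ^ 2 / (4 * c) := by
    have : A ^ 2 / (4 * c) * (4 * c) = A ^ 2 := by field_simp
    nlinarith [sq_nonneg (2 * c * y - A)]
  rw [← hy]
  linarith

lemma rpow_add_le_rpow_add_mul_rpow {α s t : ℝ} (hα0 : 0 ≤ α) (hα1 : α ≤ 1) (ht : 0 < t)
    (hts : t ≤ s) : (s + t) ^ α ≤ s ^ α + α * t ^ α := by
  have hs : 0 < s := ht.trans_le hts
  have hts' : -1 ≤ t / s := by linarith [div_pos ht hs]
  have hbernoulli : (1 + t / s) ^ α ≤ 1 + α * (t / s) :=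
    rpow_one_add_le_one_add_mul_self hts' hα0 hα1
  have hsplit : (s + t) ^ α = s ^ α * (1 + t / s) ^ α := by
    rw [← mul_rpow hs.le (by linarith : 0 ≤ 1 + t / s)]
    congr 1
    field_simp
  have hmono : s ^ α * (t / s) ≤ t ^ α :=
    calc s ^ α * (t / s) = t * s ^ (α - 1) := by rw [rpow_sub hs, rpow_one]; ring
      _ ≤ t * t ^ (α - 1) :=
        mul_le_mul_of_nonneg_left (rpow_le_rpow_of_nonpos ht hts (by linarith)) ht.le
      _ = t ^ α := by rw [rpow_sub ht, rpow_one]; field_simp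
  calc (s + t) ^ α = s ^ α * (1 + t / s) ^ α := hsplit
    _ ≤ s ^ α * (1 + α * (t / s)) := by gcongr
    _ = s ^ α + α * (s ^ α * (t / s)) := by ring
    _ ≤ s ^ α + α * t ^ α := by gcongr

section

variable {α β c D : ℝ} (hD : ∀ x, 0 ≤ x → β * log (1 + x) ≤ c * x ^ α + D)
include hD

lemma neg_le_weightLog (hc : c ≤ 1) {x : ℝ} (hx : 0 ≤ x) : -D ≤ weightLog α β x := by
  have : c * x ^ α ≤ x ^ α := by nlinarith [rpow_nonneg hx α]
  unfold weightLog
  linarith [hD x hx]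

lemma weightLog_le_of_le (hα : 0 < α) (hβ : 0 ≤ β) (hD0 : 0 ≤ D) (hc : c ≤ 1 - 2 ^ (-α))
    {s u : ℝ} (hu : 0 ≤ u) (hus : u ≤ s) :
    weightLog α β u ≤ weightLog α β s + (D + β * log 2) := by
  have hs : 0 ≤ s := hu.trans hus
  have hlog2 : 0 ≤ β * log 2 := mul_nonneg hβ (log_nonneg one_le_two)
  unfold weightLog
  rcases le_or_gt u (s / 2) with hu2 | hu2
  · have hpow : u ^ α ≤ 2 ^ (-α) * s ^ α :=
      calc u ^ α ≤ (s / 2) ^ α := rpow_le_rpow hu hu2 hα.le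
        _ = 2 ^ (-α) * s ^ α := by
          rw [div_rpow hs zero_le_two, rpow_neg zero_le_two]
          ring
    have : c * s ^ α ≤ (1 - 2 ^ (-α)) * s ^ α := by gcongr
    have : 0 ≤ β * log (1 + u) := mul_nonneg hβ (log_nonneg (by linarith))
    linarith [hD s hs]
  · have hpow : u ^ α ≤ s ^ α := rpow_le_rpow hu hus hα.le
    have hlog : log (1 + s) ≤ log 2 + log (1 + u) := by
      rw [← log_mul two_ne_zero (by linarith)]
      exact log_le_log (by linarith) (by linarith)
    nlinarith

lemma weightLog_le_add_of_lt (hα0 : 0 < α) (hα1 : α ≤ 1) (hβ : 0 ≤ β) (hc : c ≤ 1 - α)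
    {s t u : ℝ} (ht : 0 ≤ t) (hts : t ≤ s) (hsu : s < u) (hust : u ≤ s + t) :
    weightLog α β u ≤ weightLog α β s + weightLog α β t + D := by
  have ht0 : 0 < t := by linarith
  have hpow : u ^ α ≤ s ^ α + α * t ^ α :=
    (rpow_le_rpow (by linarith) hust hα0.le).trans
      (rpow_add_le_rpow_add_mul_rpow hα0.le hα1 ht0 hts)
  have hlog : β * log (1 + s) ≤ β * log (1 + u) := by gcongr; linarith
  have : c * t ^ α ≤ (1 - α) * t ^ α := by gcongr
  unfold weightLog
  linarith [hD t ht]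

lemma weightLog_le_add_of_le (hα0 : 0 < α) (hα1 : α ≤ 1) (hβ : 0 ≤ β) (hD0 : 0 ≤ D)
    (hc : c ≤ min (1 - α) (1 - 2 ^ (-α))) {s t u : ℝ} (ht : 0 ≤ t) (hts : t ≤ s)
    (hu : 0 ≤ u) (hust : u ≤ s + t) :
    weightLog α β u ≤ weightLog α β s + weightLog α β t + (2 * D + β * log 2) := by
  have hlog2 : 0 ≤ β * log 2 := mul_nonneg hβ (log_nonneg one_le_two)
  rcases le_or_gt u s with hus | hsu
  · have := weightLog_le_of_le hD hα0 hβ hD0 (hc.trans (min_le_right _ _)) hu hus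
    have := neg_le_weightLog hD (by linarith [min_le_left (1 - α) (1 - 2 ^ (-α))]) ht
    linarith
  · have := weightLog_le_add_of_lt hD hα0 hα1 hβ (hc.trans (min_le_left _ _)) ht hts hsu hust
    linarith

end

/-- Quantitative domination of the exponential weight `e^{x^α}` by the
polynomial weight `(1+x)^β`: for `0 < α < 1` and `β ≥ max{1, 6/(α(1-α))}`
there is `M ≥ 1` with
`e^{u^α}/(e^{s^α} e^{t^α}) ≤ M² (1+u)^β/((1+s)^β (1+t)^β)`
whenever `s, t, u ≥ 0` and `u ≤ s + t`. -/
theorem stmt_16 (α β : ℝ) (hα0 : 0 < α) (hα1 : α < 1)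
    (hβ : max 1 (6 / (α * (1 - α))) ≤ β) :
    ∃ M : ℝ, 1 ≤ M ∧ ∀ s t u : ℝ, 0 ≤ s → 0 ≤ t → 0 ≤ u → u ≤ s + t →
      Real.exp (u ^ α) / (Real.exp (s ^ α) * Real.exp (t ^ α)) ≤
        M ^ 2 * ((1 + u) ^ β / ((1 + s) ^ β * (1 + t) ^ β)) := by
  have hβ0 : 0 ≤ β := by linarith [le_max_left 1 (6 / (α * (1 - α)))]
  have hc : 0 < min (1 - α) (1 - 2 ^ (-α)) :=
    lt_min (by linarith) (by linarith [rpow_lt_one_of_one_lt_of_neg one_lt_two (neg_neg_of_pos hα0)])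
  obtain ⟨D, hD0, hD⟩ := exists_mul_log_one_add_le hα0 (by linarith) hβ0 hc
  set L := 2 * D + β * log 2
  have hL : 0 ≤ L := by positivity
  refine ⟨exp (L / 2), one_le_exp (by positivity), fun s t u hs ht hu hust => ?_⟩
  have key : weightLog α β u ≤ weightLog α β s + weightLog α β t + L := by
    rcases le_total t s with hts | hst
    · exact weightLog_le_add_of_le hD hα0 hα1.le hβ0 hD0 le_rfl ht hts hu hust
    · linarith [weightLog_le_add_of_le hD hα0 hα1.le hβ0 hD0 le_rfl hs hst hu (by linarith)]
  unfold weightLog at key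
  rw [← exp_add, ← exp_sub, sq, ← exp_add, add_halves, rpow_def_of_pos (by linarith : 0 < 1 + u),
    rpow_def_of_pos (by linarith : 0 < 1 + s), rpow_def_of_pos (by linarith : 0 < 1 + t),
    ← exp_add, ← exp_sub, ← exp_add]
  exact exp_le_exp.2 (by linarith)
end
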